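/- There exist constants c > 0 and C > 0 such that for every integer ℓ ≥ 1, P(N_i ≥ 2 for every integer i with ⌈ℓ/2⌉ ≤ i ≤ ℓ) ≤ C·exp(-c·ℓ). -/

import Mathlib

/-!
Take `V i = θ ^ i` with `1 < θ < m`. The generating function
`E_i θ ^ N_1 = θ (m / (m + 1 - θ)) ^ (i + 1)` yields, for a suitable `λ < 1`, the killed
contraction `E_i [V N_1; N_1 ≥ 2] ≤ λ V i` and the drift `E_i V N_1 ≤ λ V i + θ`. The drift
bounds `E V(N_t)` uniformly in `t`; the contraction, propagated backwards through the cylinder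
formula over the window `[t, ℓ]`, contributes a factor `λ` per step. So the probability is at
most `λ ^ (ℓ - ⌈ℓ/2⌉) (θ + θ / (1 - λ))`.
-/

open MeasureTheory
open scoped ENNReal Classical

/-- The transition probabilities `p(i,j) = (i+j-1 choose i) * m^(i+1)/(m+1)^(i+j)` of the
local-time Markov chain of the `m`-biased random walk. -/
noncomputable def ptrans (m : ℝ) (i j : ℕ) : ℝ :=
  ((i + j - 1).choose i : ℝ) * m ^ (i + 1) / (m + 1) ^ (i + j)

/-- `μ` is (the law of) the Markov chain with transition probabilities `p(i,j)`
started at `1`, expressed through its finite-dimensional (cylinder) distributions. -/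
def IsLocalTimeChain (m : ℝ) (μ : Measure (ℕ → ℕ)) : Prop :=
  ∀ (n : ℕ) (x : ℕ → ℕ),
    μ {ω | ∀ k ≤ n, ω k = x k} =
      (if x 0 = 1 then 1 else 0) *
        ∏ k ∈ Finset.range n, ENNReal.ofReal (ptrans m (x k) (x (k + 1)))

section TransitionOp

variable {α : Type*} (P : α → α → ℝ≥0∞)

noncomputable def transitionOp : Module.End ℝ≥0∞ (α → ℝ≥0∞) where
  toFun f i := ∑' j, P i j * f j
  map_add' f g := by
    ext i
    simp only [Pi.add_apply, mul_add, ENNReal.tsum_add]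
  map_smul' c f := by
    ext i
    simp only [Pi.smul_apply, smul_eq_mul, RingHom.id_apply, ← ENNReal.tsum_mul_left,
      mul_left_comm]

variable {P}

lemma transitionOp_apply (f : α → ℝ≥0∞) (i : α) :
    transitionOp P f i = ∑' j, P i j * f j := rfl

lemma transitionOp_mono : Monotone (transitionOp P) := fun _ _ hfg _ =>
  ENNReal.tsum_le_tsum fun j => mul_le_mul_right (hfg j) _

lemma transitionOp_pow_mono (k : ℕ) : Monotone (transitionOp P ^ k) := by
  rw [Module.End.coe_pow]
  exact transitionOp_mono.iterate k

lemma transitionOp_pow_one_le (h1 : transitionOp P 1 ≤ 1) (k : ℕ) :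
    (transitionOp P ^ k) 1 ≤ 1 := by
  induction k with
  | zero => rfl
  | succ k ih =>
    rw [pow_succ, Module.End.mul_apply]
    exact (transitionOp_pow_mono k h1).trans ih

theorem transitionOp_pow_le_add {V : α → ℝ≥0∞} {a b c : ℝ≥0∞}
    (h1 : transitionOp P 1 ≤ 1) (hV : transitionOp P V ≤ a • V + b • 1)
    (ha : a ≤ 1) (hc : a * c + b ≤ c) (k : ℕ) :
    (transitionOp P ^ k) V ≤ V + c • 1 := by
  induction k with
  | zero => exact le_self_add
  | succ k ih =>
    intro i
    calc (transitionOp P ^ (k + 1)) V i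
        ≤ (transitionOp P ^ k) (a • V + b • 1) i := by
          rw [pow_succ, Module.End.mul_apply]
          exact transitionOp_pow_mono k hV i
      _ = a * (transitionOp P ^ k) V i + b * (transitionOp P ^ k) 1 i := by
          simp only [map_add, map_smul, Pi.add_apply, Pi.smul_apply, smul_eq_mul]
      _ ≤ a * (V i + c) + b * 1 := by
          gcongr
          · simpa using ih i
          · exact transitionOp_pow_one_le h1 k i
      _ ≤ V i + c := by
          rw [mul_add, mul_one, add_assoc]
          exact add_le_add (mul_le_of_le_one_left' ha) hc
      _ = (V + c • 1) i := by simp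

end TransitionOp

section PathCylinder

variable {α : Type*}

def pathCylinder (n : ℕ) (x : ℕ → α) : Set (ℕ → α) := {ω | ∀ k ≤ n, ω k = x k}

lemma pathCylinder_update (n : ℕ) (x : ℕ → α) (j : α) :
    pathCylinder n (Function.update x (n + 1) j) = pathCylinder n x := by
  ext ω
  refine forall₂_congr fun k hk => ?_
  rw [Function.update_of_ne (by omega)]

lemma mem_pathCylinder_succ_update {n : ℕ} {x ω : ℕ → α} (hω : ω ∈ pathCylinder n x) :
    ω ∈ pathCylinder (n + 1) (Function.update x (n + 1) (ω (n + 1))) := by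
  intro k hk
  rcases Nat.lt_or_eq_of_le hk with hk | rfl
  · rw [Function.update_of_ne (by omega)]
    exact hω k (by omega)
  · rw [Function.update_self]

variable [MeasurableSpace α] [Countable α] {μ : Measure (ℕ → α)} {P : α → α → ℝ≥0∞}

/-- `h n i` bounds the probability, given the path up to time `n` with `ω n = i`, of staying
in `S k` at all times `k ∈ (n, ℓ]`; it is propagated backwards from `n = ℓ`. -/
theorem measure_inter_pathCylinder_le
    (hP : ∀ n x, μ (pathCylinder (n + 1) x) = μ (pathCylinder n x) * P (x n) (x (n + 1)))
    (S : ℕ → Set α) (h : ℕ → α → ℝ≥0∞) {ℓ : ℕ} (hℓ : ∀ i, 1 ≤ h ℓ i)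
    (hstep : ∀ n < ℓ, transitionOp P ((S (n + 1)).indicator (h (n + 1))) ≤ h n)
    {n : ℕ} (hn : n ≤ ℓ) (x : ℕ → α) :
    μ ({ω | ∀ k, n < k → k ≤ ℓ → ω k ∈ S k} ∩ pathCylinder n x) ≤
      μ (pathCylinder n x) * h n (x n) := by
  induction hn using Nat.decreasingInduction generalizing x with
  | self =>
    calc _ ≤ μ (pathCylinder ℓ x) := measure_mono Set.inter_subset_right
      _ ≤ _ := le_mul_of_one_le_right' (hℓ _)
  | of_succ n hn ih =>
    set E := {ω : ℕ → α | ∀ k, n + 1 < k → k ≤ ℓ → ω k ∈ S k}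
    set y : α → ℕ → α := fun j => Function.update x (n + 1) j
    set A : α → Set (ℕ → α) := fun j =>
      if j ∈ S (n + 1) then E ∩ pathCylinder (n + 1) (y j) else ∅
    have hcover : {ω | ∀ k, n < k → k ≤ ℓ → ω k ∈ S k} ∩ pathCylinder n x ⊆ ⋃ j, A j := by
      rintro ω ⟨hS, hω⟩
      refine Set.mem_iUnion.mpr ⟨ω (n + 1), ?_⟩
      simp only [A, if_pos (hS (n + 1) n.lt_succ_self hn)]
      exact ⟨fun k hk => hS k (by omega), mem_pathCylinder_succ_update hω⟩
    have hpiece : ∀ j, μ (A j) ≤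
        μ (pathCylinder n x) * (P (x n) j * (S (n + 1)).indicator (h (n + 1)) j) := by
      intro j
      by_cases hj : j ∈ S (n + 1)
      · calc μ (A j) ≤ μ (pathCylinder (n + 1) (y j)) * h (n + 1) (y j (n + 1)) := by
              simpa only [A, if_pos hj] using ih (y j)
          _ = _ := by
              simp only [hP, y, pathCylinder_update, Function.update_self,
                Function.update_of_ne n.succ_ne_self.symm, Set.indicator_of_mem hj, mul_assoc]
      · simp [A, hj]
    calc _ ≤ ∑' j, μ (A j) := (measure_mono hcover).trans (measure_iUnion_le _)
      _ ≤ ∑' j, μ (pathCylinder n x) * (P (x n) j * (S (n + 1)).indicator (h (n + 1)) j) :=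
          ENNReal.tsum_le_tsum hpiece
      _ ≤ _ := by
          rw [ENNReal.tsum_mul_left]
          exact mul_le_mul_right (hstep n hn (x n)) _

end PathCylinder

section Window

variable {α : Type*} [MeasurableSpace α] [Countable α] {μ : Measure (ℕ → α)} {P : α → α → ℝ≥0∞}

theorem measure_forall_mem_window_le
    (hP : ∀ n x, μ (pathCylinder (n + 1) x) = μ (pathCylinder n x) * P (x n) (x (n + 1)))
    {S : Set α} {V : α → ℝ≥0∞} {a : ℝ≥0∞} (hV : 1 ≤ V)
    (hkill : transitionOp P (S.indicator V) ≤ a • V) {t ℓ : ℕ} (htℓ : t ≤ ℓ) :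
    μ {ω | ∀ k, t ≤ k → k ≤ ℓ → ω k ∈ S} ≤
      a ^ (ℓ - t) * ∑' i, μ (pathCylinder 0 fun _ => i) * (transitionOp P ^ t) V i := by
  -- before time `t` the chain runs freely; inside the window `V` loses a factor `a` per step
  set h : ℕ → α → ℝ≥0∞ := fun n => a ^ (ℓ - max n t) • (transitionOp P ^ (t - n)) V
  have hℓ : ∀ i, 1 ≤ h ℓ i := fun i => by
    simpa [h, max_eq_left htℓ, Nat.sub_eq_zero_of_le htℓ] using hV i
  have hstep : ∀ n < ℓ,
      transitionOp P ({j | t ≤ n + 1 → j ∈ S}.indicator (h (n + 1))) ≤ h n := by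
    intro n hn
    rcases lt_or_ge n t with hnt | htn
    · have hpow : t - n = t - (n + 1) + 1 := by omega
      calc _ ≤ transitionOp P (h (n + 1)) :=
            transitionOp_mono (Set.indicator_le_self _ _)
        _ = h n := by
            simp only [h, map_smul, max_eq_right hnt.le, max_eq_right (show n + 1 ≤ t from hnt),
              hpow, pow_succ', Module.End.mul_apply]
    · have htn' : t ≤ n + 1 := htn.trans n.le_succ
      have hS : {j | t ≤ n + 1 → j ∈ S} = S := by ext j; simp [htn']
      have hpow : ℓ - n = ℓ - (n + 1) + 1 := by omega
      calc _ = a ^ (ℓ - (n + 1)) • transitionOp P (S.indicator V) := by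
            have hh : h (n + 1) = a ^ (ℓ - (n + 1)) • V := by
              simp [h, max_eq_left htn', Nat.sub_eq_zero_of_le htn']
            rw [← map_smul, hS, hh]
            exact congrArg _ (Set.indicator_const_smul S (a ^ (ℓ - (n + 1))) V)
        _ ≤ a ^ (ℓ - (n + 1)) • a • V := fun i => mul_le_mul_right (hkill i) _
        _ = h n := by
            simp [h, max_eq_left htn, Nat.sub_eq_zero_of_le htn, hpow, pow_succ, mul_smul]
  have hbound := fun i => measure_inter_pathCylinder_le hP (fun k => {j | t ≤ k → j ∈ S}) h hℓ
    hstep (Nat.zero_le ℓ) fun _ => i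
  calc _ ≤ μ (⋃ i, {ω | ∀ k, 0 < k → k ≤ ℓ → ω k ∈ {j | t ≤ k → j ∈ S}} ∩
        pathCylinder 0 fun _ => i) := by
        refine measure_mono fun ω hω => Set.mem_iUnion.mpr ⟨ω 0, ?_, ?_⟩
        · exact fun k _ hkℓ htk => hω k htk hkℓ
        · intro k hk
          rw [Nat.le_zero.mp hk]
    _ ≤ ∑' i, μ (pathCylinder 0 fun _ => i) * h 0 i :=
        (measure_iUnion_le _).trans (ENNReal.tsum_le_tsum hbound)
    _ = _ := by
        simp only [h, Nat.zero_max, Nat.sub_zero, Pi.smul_apply, smul_eq_mul,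
          ← ENNReal.tsum_mul_left, mul_left_comm]

end Window

section LocalTimeKernel

variable {m : ℝ}

lemma ptrans_nonneg (hm : 0 ≤ m) (i j : ℕ) : 0 ≤ ptrans m i j := by
  unfold ptrans
  positivity

lemma ptrans_zero_right {i : ℕ} (hi : i ≠ 0) : ptrans m i 0 = 0 := by
  simp [ptrans, Nat.choose_eq_zero_of_lt (Nat.sub_one_lt hi)]

lemma ptrans_one_right (i : ℕ) : ptrans m i 1 = (m / (m + 1)) ^ (i + 1) := by
  simp [ptrans, div_pow]

-- `p(i, · + 1)` is a negative binomial law, whence the generating function.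
lemma hasSum_ptrans_mul_pow {i : ℕ} (hi : i ≠ 0) {t : ℝ} (ht0 : 0 ≤ t) (ht : t < m + 1) :
    HasSum (fun j => ptrans m i j * t ^ j) (t * (m / (m + 1 - t)) ^ (i + 1)) := by
  have hm1 : 0 < m + 1 := ht0.trans_lt ht
  have hu : ‖t / (m + 1)‖ < 1 := by
    rw [Real.norm_eq_abs, abs_of_nonneg (by positivity), div_lt_one hm1]
    exact ht
  have hterm : ∀ n : ℕ, ptrans m i (n + 1) * t ^ (n + 1) =
      t * m ^ (i + 1) / (m + 1) ^ (i + 1) * ((n + i).choose i * (t / (m + 1)) ^ n) := by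
    intro n
    rw [ptrans, show i + (n + 1) - 1 = n + i by omega, show i + (n + 1) = i + 1 + n by omega,
      div_pow]
    field_simp
    ring
  rw [← hasSum_nat_add_iff' 1]
  simp only [Finset.range_one, Finset.sum_singleton, pow_zero, mul_one, ptrans_zero_right hi,
    sub_zero, hterm]
  have hmt : 0 < m + 1 - t := by linarith
  have hsum : t * (m / (m + 1 - t)) ^ (i + 1) =
      t * m ^ (i + 1) / (m + 1) ^ (i + 1) * (1 / (1 - t / (m + 1)) ^ (i + 1)) := by
    rw [one_sub_div hm1.ne', div_pow, div_pow]
    field_simp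
  rw [hsum]
  exact (hasSum_choose_mul_geometric_of_norm_lt_one i hu).mul_left _

end LocalTimeKernel

section LocalTimeChain

variable {m : ℝ}

/-- The kernel `p` with its row `0` replaced by `0`. The chain never visits `0`
(`p(i, 0) = 0` for `i ≥ 1`), while the raw formula gives `p(0, 0) = m`. -/
noncomputable def localTimeKernel (m : ℝ) (i j : ℕ) : ℝ≥0∞ :=
  if i = 0 then 0 else ENNReal.ofReal (ptrans m i j)

@[simp]
lemma transitionOp_localTimeKernel_zero (f : ℕ → ℝ≥0∞) :
    transitionOp (localTimeKernel m) f 0 = 0 := by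
  simp [transitionOp_apply, localTimeKernel]

lemma transitionOp_localTimeKernel_pow (hm : 0 ≤ m) {i : ℕ} (hi : i ≠ 0) {t : ℝ} (ht0 : 0 ≤ t)
    (ht : t < m + 1) :
    transitionOp (localTimeKernel m) (fun j => ENNReal.ofReal (t ^ j)) i =
      ENNReal.ofReal (t * (m / (m + 1 - t)) ^ (i + 1)) := by
  simp only [transitionOp_apply, localTimeKernel, if_neg hi,
    ← ENNReal.ofReal_mul (ptrans_nonneg hm i _)]
  exact (ENNReal.ofReal_tsum_of_nonneg (fun j => by positivity [ptrans_nonneg hm i j])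
    (hasSum_ptrans_mul_pow hi ht0 ht).summable).symm.trans
    (congrArg _ (hasSum_ptrans_mul_pow hi ht0 ht).tsum_eq)

lemma transitionOp_localTimeKernel_one_le (hm : 0 < m) :
    transitionOp (localTimeKernel m) 1 ≤ 1 := by
  intro i
  rcases eq_or_ne i 0 with rfl | hi
  · simp
  · have := transitionOp_localTimeKernel_pow hm.le hi zero_le_one (by linarith)
    simp only [one_pow, ENNReal.ofReal_one, add_sub_cancel_right, div_self hm.ne', one_mul] at this
    exact this.le

lemma transitionOp_localTimeKernel_eq_indicator_add (f : ℕ → ℝ≥0∞) {i : ℕ} (hi : i ≠ 0) :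
    transitionOp (localTimeKernel m) f i =
      transitionOp (localTimeKernel m) ({j | 2 ≤ j}.indicator f) i +
        ENNReal.ofReal ((m / (m + 1)) ^ (i + 1)) * f 1 := by
  conv_lhs => rw [← Set.indicator_self_add_compl {j | 2 ≤ j} f]
  rw [map_add, Pi.add_apply, transitionOp_apply ({j | 2 ≤ j}ᶜ.indicator f),
    tsum_eq_sum (s := Finset.range 2) fun j hj => by simp_all]
  simp [Finset.sum_range_succ, localTimeKernel, hi, ptrans_zero_right hi, ptrans_one_right]

/-- With `V j = θ ^ j`, the real form of `E_i [V N_1; N_1 ≥ 2] ≤ lam * V i`: by the generating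
function the left side is `E_i [V N_1] - p(i, 1) V 1`. -/
def KilledDrift (m θ lam : ℝ) : Prop :=
  ∀ i : ℕ, θ * (m / (m + 1 - θ)) ^ (i + 1) ≤ lam * θ ^ i + θ * (m / (m + 1)) ^ (i + 1)

variable {θ lam : ℝ}

lemma transitionOp_localTimeKernel_indicator_le (hm : 0 ≤ m) (hθ0 : 0 ≤ θ) (hθ : θ < m + 1)
    (hlam : 0 ≤ lam)
    (hcontr : KilledDrift m θ lam) :
    transitionOp (localTimeKernel m) ({j | 2 ≤ j}.indicator fun j => ENNReal.ofReal (θ ^ j)) ≤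
      ENNReal.ofReal lam • fun j => ENNReal.ofReal (θ ^ j) := by
  intro i
  rcases eq_or_ne i 0 with rfl | hi
  · simp
  have hsplit :=
    transitionOp_localTimeKernel_eq_indicator_add (m := m) (fun j => ENNReal.ofReal (θ ^ j)) hi
  rw [transitionOp_localTimeKernel_pow hm hi hθ0 hθ] at hsplit
  refine ENNReal.le_of_add_le_add_right
    (a := ENNReal.ofReal ((m / (m + 1)) ^ (i + 1)) * ENNReal.ofReal (θ ^ 1))
    (ENNReal.mul_ne_top ENNReal.ofReal_ne_top ENNReal.ofReal_ne_top) ?_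
  rw [← hsplit]
  simp only [Pi.smul_apply, smul_eq_mul, pow_one]
  rw [← ENNReal.ofReal_mul hlam, ← ENNReal.ofReal_mul (by positivity),
    ← ENNReal.ofReal_add (by positivity) (by positivity)]
  exact ENNReal.ofReal_le_ofReal (by linarith [hcontr i])

lemma transitionOp_localTimeKernel_le (hm : 0 ≤ m) (hθ0 : 0 ≤ θ) (hθ : θ < m + 1)
    (hlam : 0 ≤ lam)
    (hcontr : KilledDrift m θ lam) :
    transitionOp (localTimeKernel m) (fun j => ENNReal.ofReal (θ ^ j)) ≤
      ENNReal.ofReal lam • (fun j => ENNReal.ofReal (θ ^ j)) + ENNReal.ofReal θ • 1 := by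
  intro i
  rcases eq_or_ne i 0 with rfl | hi
  · simp
  have hq : θ * (m / (m + 1)) ^ (i + 1) ≤ θ :=
    mul_le_of_le_one_right hθ0 (pow_le_one₀ (by positivity) (div_le_one_of_le₀ (by linarith)
      (by linarith)))
  simp only [transitionOp_localTimeKernel_pow hm hi hθ0 hθ, Pi.add_apply, Pi.smul_apply,
    smul_eq_mul, Pi.one_apply, mul_one]
  rw [← ENNReal.ofReal_mul hlam, ← ENNReal.ofReal_add (by positivity) hθ0]
  exact ENNReal.ofReal_le_ofReal (by linarith [hcontr i])

end LocalTimeChain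

namespace IsLocalTimeChain

variable {m : ℝ} {μ : Measure (ℕ → ℕ)}

lemma measure_pathCylinder_zero (hμ : IsLocalTimeChain m μ) (x : ℕ → ℕ) :
    μ (pathCylinder 0 x) = if x 0 = 1 then 1 else 0 := by
  rw [pathCylinder, hμ, Finset.prod_range_zero, mul_one]

lemma measure_pathCylinder_succ_ofReal (hμ : IsLocalTimeChain m μ) (n : ℕ) (x : ℕ → ℕ) :
    μ (pathCylinder (n + 1) x) =
      μ (pathCylinder n x) * ENNReal.ofReal (ptrans m (x n) (x (n + 1))) := by
  rw [pathCylinder, pathCylinder, hμ, hμ, Finset.prod_range_succ, mul_assoc]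

lemma measure_pathCylinder_eq_zero (hμ : IsLocalTimeChain m μ) :
    ∀ {n : ℕ} {x : ℕ → ℕ}, x n = 0 → μ (pathCylinder n x) = 0
  | 0, x, hx => by simp [hμ.measure_pathCylinder_zero, hx]
  | n + 1, x, hx => by
    rw [hμ.measure_pathCylinder_succ_ofReal, hx]
    rcases eq_or_ne (x n) 0 with hxn | hxn
    · rw [hμ.measure_pathCylinder_eq_zero hxn, zero_mul]
    · rw [ptrans_zero_right hxn, ENNReal.ofReal_zero, mul_zero]

lemma measure_pathCylinder_succ (hμ : IsLocalTimeChain m μ) (n : ℕ) (x : ℕ → ℕ) :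
    μ (pathCylinder (n + 1) x) = μ (pathCylinder n x) * localTimeKernel m (x n) (x (n + 1)) := by
  rw [hμ.measure_pathCylinder_succ_ofReal, localTimeKernel]
  split_ifs with hxn
  · simp [hμ.measure_pathCylinder_eq_zero hxn]
  · rfl

end IsLocalTimeChain

open Filter Topology

lemma HasDerivAt.eventually_nhdsGT_lt {f : ℝ → ℝ} {f' x : ℝ} (hf : HasDerivAt f f' x)
    (hf' : 0 < f') : ∀ᶠ y in 𝓝[>] x, f x < f y := by
  have hslope : ∀ᶠ y in 𝓝[>] x, 0 < slope f x y :=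
    nhdsWithin_mono x (fun _ hy => ne_of_gt hy)
      ((hasDerivAt_iff_tendsto_slope.mp hf).eventually (eventually_gt_nhds hf'))
  filter_upwards [hslope, self_mem_nhdsWithin] with y hy hxy
  rw [slope_def_field] at hy
  have := (div_pos_iff_of_pos_right (sub_pos.mpr hxy)).mp hy
  linarith

section Constants

variable {m θ : ℝ}

lemma exists_killedDrift_of_pow_lt {k : ℕ} (hθ1 : 1 ≤ θ) (hθm : θ ≤ m)
    (hpow : (m / (m + 1 - θ)) ^ (k + 2) < θ ^ k)
    (hnear : θ * (m / (m + 1 - θ)) ^ (k + 2) < 1 + (m / (m + 1)) ^ (k + 2) / 2) :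
    ∃ lam : ℝ, 0 < lam ∧ lam < 1 ∧ KilledDrift m θ lam := by
  set r := m / (m + 1 - θ)
  set q := m / (m + 1)
  have hm0 : 0 < m := by linarith
  have hmθ : 0 < m + 1 - θ := by linarith
  have hr1 : 1 ≤ r := by rw [le_div_iff₀ hmθ]; linarith
  have hrθ : r ≤ θ := by rw [div_le_iff₀ hmθ]; nlinarith
  have hq0 : 0 < q := by positivity
  have hq1 : q ≤ 1 := div_le_one_of_le₀ (by linarith) (by linarith)
  have hθk : 0 < θ ^ k := by positivity
  refine ⟨max (r ^ (k + 2) / θ ^ k) (1 - q ^ (k + 2) / 2),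
    lt_max_of_lt_right (by linarith [pow_le_one₀ hq0.le hq1 (n := k + 2)]),
    max_lt ((div_lt_one hθk).mpr hpow) (by linarith [pow_pos hq0 (k + 2)]), fun i => ?_⟩
  rcases le_or_gt i (k + 1) with hik | hik
  · have hθi : 1 ≤ θ ^ i := one_le_pow₀ hθ1
    have hlam : 1 - q ^ (k + 2) / 2 ≤ max (r ^ (k + 2) / θ ^ k) (1 - q ^ (k + 2) / 2) * θ ^ i :=
      (le_max_right _ _).trans (le_mul_of_one_le_right (by positivity) hθi)
    have hq : q ^ (k + 2) ≤ θ * q ^ (i + 1) :=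
      (pow_le_pow_of_le_one hq0.le hq1 (by omega)).trans (le_mul_of_one_le_left (by positivity) hθ1)
    calc θ * r ^ (i + 1) ≤ θ * r ^ (k + 2) :=
          mul_le_mul_of_nonneg_left (pow_le_pow_right₀ hr1 (by omega)) (by linarith)
      _ ≤ _ := by linarith
  · obtain ⟨d, rfl⟩ : ∃ d, i = k + 1 + d := ⟨i - (k + 1), by omega⟩
    calc θ * r ^ (k + 1 + d + 1) = θ * r ^ (k + 2) * r ^ d := by ring
      _ ≤ θ * r ^ (k + 2) * θ ^ d := by gcongr
      _ = r ^ (k + 2) / θ ^ k * θ ^ (k + 1 + d) := by field_simp; ring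
      _ ≤ _ := le_add_of_le_of_nonneg
          (mul_le_mul_of_nonneg_right (le_max_left _ _) (by positivity)) (by positivity)

theorem exists_killedDrift (hm : 1 < m) :
    ∃ θ lam : ℝ, 1 < θ ∧ θ < m ∧ 0 < lam ∧ lam < 1 ∧ KilledDrift m θ lam := by
  obtain ⟨k, hk⟩ := exists_nat_gt (2 / (m - 1))
  have hkm : (k : ℝ) + 2 < k * m := by
    rw [div_lt_iff₀ (by linarith)] at hk
    linarith
  -- `k * m > k + 2` makes `θ ^ k * (m + 1 - θ) ^ (k + 2)` increase at `θ = 1`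
  have hderiv : HasDerivAt (fun θ : ℝ => θ ^ k * (m + 1 - θ) ^ (k + 2))
      (m ^ (k + 1) * (k * m - (k + 2))) 1 := by
    refine ((hasDerivAt_pow k 1).fun_mul
      (((hasDerivAt_id 1).const_sub (m + 1)).fun_pow (k + 2))).congr_deriv ?_
    simp only [one_pow, id, add_sub_cancel_right, show k + 2 - 1 = k + 1 from rfl, Nat.cast_add]
    ring
  have hincr := hderiv.eventually_nhdsGT_lt (mul_pos (by positivity) (by linarith))
  have hnear : ∀ᶠ θ in 𝓝[>] (1 : ℝ),
      θ * (m / (m + 1 - θ)) ^ (k + 2) < 1 + (m / (m + 1)) ^ (k + 2) / 2 := by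
    have hcont : ContinuousAt (fun θ : ℝ => θ * (m / (m + 1 - θ)) ^ (k + 2)) 1 :=
      continuousAt_id.mul ((continuousAt_const.div (continuousAt_const.sub continuousAt_id)
        (by simp; linarith)).pow _)
    refine nhdsWithin_le_nhds (hcont.eventually (gt_mem_nhds ?_))
    simp only [one_mul, add_sub_cancel_right, div_self (by linarith : m ≠ 0), one_pow]
    linarith [pow_pos (by positivity : 0 < m / (m + 1)) (k + 2)]
  obtain ⟨θ, hF, hθ, ⟨hθ1, hθm⟩⟩ :=
    (hincr.and (hnear.and (Ioo_mem_nhdsGT hm))).exists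
  have hpow : (m / (m + 1 - θ)) ^ (k + 2) < θ ^ k := by
    rw [div_pow, div_lt_iff₀ (by apply pow_pos; linarith)]
    simpa using hF
  obtain ⟨lam, hlam0, hlam1, hlam⟩ := exists_killedDrift_of_pow_lt hθ1.le hθm.le hpow hθ
  exact ⟨θ, lam, hθ1, hθm, hlam0, hlam1, hlam⟩

end Constants

lemma exists_pow_le_exp {lam : ℝ} (hlam0 : 0 < lam) (hlam1 : lam < 1) :
    ∃ c > 0, ∀ d ℓ : ℕ, ℓ ≤ 2 * d + 1 → lam ^ d ≤ Real.exp c * Real.exp (-c * ℓ) := by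
  have hlog : Real.log lam < 0 := Real.log_neg hlam0 hlam1
  refine ⟨-Real.log lam / 2, by linarith, fun d ℓ hdℓ => ?_⟩
  have hdℓ' : ((ℓ : ℝ) - 1) / 2 ≤ d := by
    have : (ℓ : ℝ) ≤ 2 * d + 1 := by exact_mod_cast hdℓ
    linarith
  rw [← Real.exp_add, ← Real.exp_log (pow_pos hlam0 d), Real.log_pow, Real.exp_le_exp]
  nlinarith

namespace IsLocalTimeChain

variable {m θ lam : ℝ} {μ : Measure (ℕ → ℕ)}

theorem measure_avoid_one_le (hμ : IsLocalTimeChain m μ) (hθ1 : 1 < θ) (hθm : θ < m)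
    (hlam0 : 0 < lam) (hlam1 : lam < 1)
    (hcontr : KilledDrift m θ lam)
    {t ℓ : ℕ} (htℓ : t ≤ ℓ) :
    μ {ω | ∀ i : ℕ, t ≤ i → i ≤ ℓ → 2 ≤ ω i} ≤
      ENNReal.ofReal (lam ^ (ℓ - t) * (θ + θ / (1 - lam))) := by
  have hm0 : 0 ≤ m := by linarith
  have hθ : θ < m + 1 := by linarith
  have hwindow := measure_forall_mem_window_le hμ.measure_pathCylinder_succ (S := {j | 2 ≤ j})
    (fun j => ENNReal.one_le_ofReal.mpr (one_le_pow₀ hθ1.le))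
    (transitionOp_localTimeKernel_indicator_le hm0 (by linarith) hθ hlam0.le hcontr) htℓ
  have hdrift : ENNReal.ofReal lam * ENNReal.ofReal (θ / (1 - lam)) + ENNReal.ofReal θ ≤
      ENNReal.ofReal (θ / (1 - lam)) := by
    have : 0 < 1 - lam := by linarith
    rw [← ENNReal.ofReal_mul hlam0.le, ← ENNReal.ofReal_add (by positivity) (by linarith)]
    refine ENNReal.ofReal_le_ofReal (le_of_eq ?_)
    field_simp
    ring
  have hiter := transitionOp_pow_le_add (transitionOp_localTimeKernel_one_le (by linarith))
    (transitionOp_localTimeKernel_le hm0 (by linarith) hθ hlam0.le hcontr)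
    (ENNReal.ofReal_le_one.mpr hlam1.le) hdrift t 1
  rw [tsum_eq_single 1 fun i hi => by simp [hμ.measure_pathCylinder_zero, hi],
    hμ.measure_pathCylinder_zero, if_pos rfl, one_mul] at hwindow
  calc _ ≤ _ := hwindow
    _ ≤ ENNReal.ofReal lam ^ (ℓ - t) * (ENNReal.ofReal θ + ENNReal.ofReal (θ / (1 - lam))) := by
        simpa using mul_le_mul_right hiter _
    _ = _ := by
        rw [← ENNReal.ofReal_pow hlam0.le, ← ENNReal.ofReal_add (by linarith)
          (div_nonneg (by linarith) (by linarith)), ← ENNReal.ofReal_mul (by positivity)]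

end IsLocalTimeChain

theorem avoid_one_window_exponential_bound_general (m : ℝ) (hm : 1 < m)
    (μ : Measure (ℕ → ℕ)) (hμ : IsLocalTimeChain m μ) :
    ∃ c C : ℝ, 0 < c ∧ 0 < C ∧ ∀ ℓ : ℕ, 1 ≤ ℓ →
      μ {ω | ∀ i : ℕ, (ℓ + 1) / 2 ≤ i → i ≤ ℓ → 2 ≤ ω i} ≤
        ENNReal.ofReal (C * Real.exp (-c * ℓ)) := by
  obtain ⟨θ, lam, hθ1, hθm, hlam0, hlam1, hcontr⟩ := exists_killedDrift hm
  obtain ⟨c, hc, hexp⟩ := exists_pow_le_exp hlam0 hlam1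
  have hB : 0 < θ + θ / (1 - lam) := by
    have : 0 < 1 - lam := by linarith
    positivity
  refine ⟨c, (θ + θ / (1 - lam)) * Real.exp c, hc, by positivity, fun ℓ _ => ?_⟩
  refine (hμ.measure_avoid_one_le hθ1 hθm hlam0 hlam1 hcontr (by omega)).trans
    (ENNReal.ofReal_le_ofReal ?_)
  rw [mul_comm, mul_assoc]
  exact mul_le_mul_of_nonneg_left (hexp _ _ (by omega)) hB.le

/-- There are constants `c > 0` and `C > 0` such that for every integer
`ℓ ≥ 1`, `P(N_i ≥ 2 for every integer i with ⌈ℓ/2⌉ ≤ i ≤ ℓ) ≤ C·exp(-c·ℓ)`. -/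
theorem avoid_one_window_exponential_bound (m : ℝ) (hm : 1 < m)
    (μ : Measure (ℕ → ℕ)) [IsProbabilityMeasure μ] (hμ : IsLocalTimeChain m μ) :
    ∃ c C : ℝ, 0 < c ∧ 0 < C ∧ ∀ ℓ : ℕ, 1 ≤ ℓ →
      μ {ω | ∀ i : ℕ, (ℓ + 1) / 2 ≤ i → i ≤ ℓ → 2 ≤ ω i} ≤
        ENNReal.ofReal (C * Real.exp (-c * ℓ)) :=
  avoid_one_window_exponential_bound_general m hm μ hμ
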